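/- Let X be a Banach space, A a bounded linear operator on X, (K_n)_{n≥1} compact maps on X, and f_n(x) = (A + K_n)⋯(A + K_1)x. Let (a_n) be a sequence of positive reals with a_n → 0 and L ⊆ ℕ an infinite set. Then the set {x ∈ X : ‖f_n(x)‖ ≥ a_n·‖A^n‖_μ for infinitely many n ∈ L} is residual (contains a dense Gδ) in X. -/

import Mathlib

/-!
Write `f n = A ^ n + D n`; by induction `D n` maps bounded sets into compact sets. If `‖T‖_μ > 0`
and `C` is compact, let `F` be the span of a fine finite net of `C`. Some unit vector `u` has
`T u` at distance `> 3 ‖T‖_μ / 8` from `F`: otherwise the norming functionals of a finite net of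
a ball of `F`, composed with `T`, cut out a closed finite-codimensional subspace on which `T` has
norm about `2 · 3 ‖T‖_μ / 8 < ‖T‖_μ`. Applied to `T = A ^ n` and `C ⊇ D n (closedBall x₀ (r / 2))`,
the point `x = x₀ + (r / 2) u` has `‖f n x‖ > r ‖A ^ n‖_μ / 8`, which beats `a n ‖A ^ n‖_μ` as soon
as `a n < r / 8`. So for each `N` the open set of `x` with `‖f n x‖ > a n ‖A ^ n‖_μ` for some
`n ∈ L`, `n ≥ N`, is dense, and the target set contains the intersection of these sets.
-/

/-- The μ-measure of non-compactness of a bounded operator. -/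
noncomputable def muNorm {X : Type*} [NormedAddCommGroup X] [NormedSpace ℂ X]
    (A : X →L[ℂ] X) : ℝ :=
  sInf {c : ℝ | ∃ M : Submodule ℂ X, IsClosed (M : Set X) ∧
    FiniteDimensional ℂ (X ⧸ M) ∧ c = ‖A.comp M.subtypeL‖}

open Metric Set Filter

section Norming
variable {𝕜 E : Type*} [RCLike 𝕜] [NormedAddCommGroup E] [NormedSpace 𝕜 E]

lemma norm_le_two_mul_norm_sub_of_norming {g : StrongDual 𝕜 E} (hg : ‖g‖ ≤ 1) {w y : E}
    (hgw : g w = ‖w‖) (hgy : g y = 0) : ‖y‖ ≤ 2 * ‖y - w‖ := by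
  have hw : ‖w‖ ≤ ‖y - w‖ :=
    calc ‖w‖ = ‖g (w - y)‖ := by simp [map_sub, hgw, hgy]
      _ ≤ ‖g‖ * ‖w - y‖ := g.le_opNorm _
      _ ≤ ‖y - w‖ := by rw [norm_sub_rev]; exact mul_le_of_le_one_left (norm_nonneg _) hg
  linarith [norm_le_norm_sub_add y w]

lemma mul_infDist_le_norm_smul_add (F : Submodule 𝕜 E) (c : 𝕜) (y : E) {w : E} (hw : w ∈ F) :
    ‖c‖ * infDist y F ≤ ‖c • y + w‖ := by
  rcases eq_or_ne c 0 with rfl | hc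
  · simp
  have hz : -c⁻¹ • w ∈ F := F.smul_mem _ hw
  calc ‖c‖ * infDist y F ≤ ‖c‖ * dist y (-c⁻¹ • w) := by
        gcongr; exact infDist_le_dist_of_mem hz
    _ = ‖c • y + w‖ := by
        rw [dist_eq_norm, ← norm_smul, smul_sub, smul_smul, mul_neg, mul_inv_cancel₀ hc, neg_smul,
          one_smul, sub_neg_eq_add]

end Norming

section MuNorm
variable {X : Type*} [NormedAddCommGroup X] [NormedSpace ℂ X]

lemma muNorm_nonneg (T : X →L[ℂ] X) : 0 ≤ muNorm T := by
  refine Real.sInf_nonneg ?_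
  rintro _ ⟨_, -, -, rfl⟩
  positivity

lemma muNorm_le_of_forall_norm_le {T : X →L[ℂ] X} {M : Submodule ℂ X}
    (hM : IsClosed (M : Set X)) [FiniteDimensional ℂ (X ⧸ M)] {C : ℝ}
    (hC : ∀ u ∈ M, ‖u‖ ≤ 1 → ‖T u‖ ≤ C) : muNorm T ≤ C := by
  have hC0 : 0 ≤ C := by simpa using hC 0 M.zero_mem (by simp)
  refine le_trans (csInf_le ⟨0, ?_⟩ ⟨M, hM, ‹_›, rfl⟩ : muNorm T ≤ ‖T.comp M.subtypeL‖) ?_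
  · rintro _ ⟨_, -, -, rfl⟩
    positivity
  · exact ContinuousLinearMap.opNorm_le_of_unit_norm hC0 fun u hu => hC u u.2 hu.le

lemma muNorm_le_two_mul_of_forall_infDist_le (T : X →L[ℂ] X) (F : Submodule ℂ X)
    [FiniteDimensional ℂ F] {t : ℝ} (h : ∀ u : X, ‖u‖ ≤ 1 → infDist (T u) F ≤ t) :
    muNorm T ≤ 2 * t := by
  refine le_of_forall_pos_le_add fun δ hδ => ?_
  -- every point of `F` within `t + δ / 4` of `T (closedBall 0 1)` lies in this ball
  obtain ⟨W, hWfin, hW⟩ := totallyBounded_iff.mp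
    ((isCompact_closedBall (0 : F) (‖T‖ + t + δ)).image continuous_subtype_val).totallyBounded
    (δ / 4) (by positivity)
  have : Fintype W := hWfin.fintype
  choose g hg1 hgw using fun w : X => exists_dual_vector'' ℂ w
  let Φ : X →L[ℂ] (W → ℂ) := ContinuousLinearMap.pi fun w => (g w).comp T
  have : FiniteDimensional ℂ (X ⧸ Φ.ker) :=
    Φ.toLinearMap.quotKerEquivRange.symm.finiteDimensional
  refine muNorm_le_of_forall_norm_le Φ.isClosed_ker fun u hu hu1 => ?_
  obtain ⟨φ, hφF, hφ⟩ := (infDist_lt_iff ⟨0, F.zero_mem⟩).mp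
    ((h u hu1).trans_lt (lt_add_of_pos_right t (by positivity : 0 < δ / 4)))
  have hφR : ‖φ‖ ≤ ‖T‖ + t + δ := by
    linarith [T.unit_le_opNorm u hu1, norm_le_norm_add_norm_sub (T u) φ, dist_eq_norm (T u) φ]
  obtain ⟨w, hwW, hφw⟩ := mem_iUnion₂.mp (hW ⟨⟨φ, hφF⟩, by simpa using hφR, rfl⟩)
  have hgTu : g w (T u) = 0 := congrFun hu ⟨w, hwW⟩
  calc ‖T u‖ ≤ 2 * ‖T u - w‖ := norm_le_two_mul_norm_sub_of_norming (hg1 w) (hgw w) hgTu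
    _ ≤ 2 * (dist (T u) φ + dist φ w) := by rw [← dist_eq_norm]; gcongr; exact dist_triangle _ _ _
    _ ≤ 2 * t + δ := by rw [mem_ball] at hφw; linarith

end MuNorm

section Orbit
variable {𝕜 X : Type*} [NontriviallyNormedField 𝕜] [NormedAddCommGroup X] [NormedSpace 𝕜 X]
  {A : X →L[𝕜] X} {K : ℕ → X → X} {f : ℕ → X → X}

lemma continuous_orbit (hK : ∀ j, 1 ≤ j → Continuous (K j)) (hf0 : ∀ x, f 0 x = x)
    (hfs : ∀ j x, f (j + 1) x = A (f j x) + K (j + 1) (f j x)) (n : ℕ) : Continuous (f n) := by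
  induction n with
  | zero =>
    rw [funext hf0]
    exact continuous_id'
  | succ n ih =>
    rw [funext (hfs n)]
    exact (A.continuous.comp ih).add ((hK (n + 1) n.succ_pos).comp ih)

open Pointwise in
lemma exists_isCompact_mapsTo_orbit_sub_pow
    (hK : ∀ j, 1 ≤ j → ∀ B : Set X, Bornology.IsBounded B → IsCompact (closure (K j '' B)))
    (hf0 : ∀ x, f 0 x = x) (hfs : ∀ j x, f (j + 1) x = A (f j x) + K (j + 1) (f j x))
    (n : ℕ) {B : Set X} (hB : Bornology.IsBounded B) :
    ∃ C, IsCompact C ∧ MapsTo (fun x => f n x - (A ^ n) x) B C := by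
  induction n with
  | zero => exact ⟨{0}, isCompact_singleton, fun x _ => by simp [hf0]⟩
  | succ n ih =>
    obtain ⟨C, hC, hBC⟩ := ih
    have hfB : Bornology.IsBounded (f n '' B) := by
      refine ((A ^ n).lipschitz.isBounded_image hB |>.add hC.isBounded).subset ?_
      rintro - ⟨x, hx, rfl⟩
      exact ⟨_, mem_image_of_mem _ hx, _, hBC hx, add_sub_cancel _ _⟩
    refine ⟨A '' C + closure (K (n + 1) '' (f n '' B)),
      (hC.image A.continuous).add (hK (n + 1) n.succ_pos _ hfB), fun x hx => ?_⟩
    have hsplit : f (n + 1) x - (A ^ (n + 1)) x = A (f n x - (A ^ n) x) + K (n + 1) (f n x) := by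
      rw [hfs, pow_succ', mul_apply_eq_comp, map_sub]
      abel
    dsimp only
    rw [hsplit]
    exact add_mem_add (mem_image_of_mem _ (hBC hx))
      (subset_closure (mem_image_of_mem _ (mem_image_of_mem _ hx)))

end Orbit

lemma exists_mem_closedBall_muNorm_lt_norm {X : Type*} [NormedAddCommGroup X]
    [NormedSpace ℂ X] (T : X →L[ℂ] X) (hT : 0 < muNorm T) (g : X → X) {x₀ : X} {ε : ℝ}
    (hε : 0 < ε) {C : Set X} (hC : IsCompact C)
    (hgC : MapsTo (fun x => g x - T x) (closedBall x₀ ε) C) :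
    ∃ x ∈ closedBall x₀ ε, ε * muNorm T / 4 < ‖g x‖ := by
  set μ := muNorm T
  obtain ⟨W, hWfin, hW⟩ := totallyBounded_iff.mp
    (hC.image (continuous_const_add (T x₀))).totallyBounded (ε * μ / 8) (by positivity)
  let F := Submodule.span ℂ W
  have : FiniteDimensional ℂ F := FiniteDimensional.span_of_finite ℂ hWfin
  obtain ⟨u, hu1, hu⟩ : ∃ u : X, ‖u‖ ≤ 1 ∧ 3 * μ / 8 < infDist (T u) F := by
    by_contra! h
    linarith [muNorm_le_two_mul_of_forall_infDist_le T F h]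
  set x := x₀ + (ε : ℂ) • u
  have hx : x ∈ closedBall x₀ ε := by
    simpa [x, norm_smul, abs_of_pos hε] using mul_le_of_le_one_right hε.le hu1
  refine ⟨x, hx, ?_⟩
  set v := T x₀ + (g x - T x)
  have hv : v ∈ (T x₀ + ·) '' C := mem_image_of_mem _ (hgC hx)
  obtain ⟨w, hwW, hvw⟩ := mem_iUnion₂.mp (hW hv)
  have hgx : g x = (ε : ℂ) • T u + v := by
    simp only [v, x, map_add, map_smul]
    abel
  calc ε * μ / 4 = ε * (3 * μ / 8) - ε * μ / 8 := by ring
    _ < ‖(ε : ℂ)‖ * infDist (T u) F - ‖v - w‖ := by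
        rw [mem_ball, dist_eq_norm] at hvw
        rw [Complex.norm_real, Real.norm_of_nonneg hε.le]
        gcongr
    _ ≤ ‖(ε : ℂ) • T u + w‖ - ‖v - w‖ := by
        gcongr
        exact mul_infDist_le_norm_smul_add F _ _ (Submodule.subset_span hwW)
    _ ≤ ‖g x‖ := by
        rw [hgx, sub_le_iff_le_add]
        refine (norm_le_norm_add_norm_sub ((ε : ℂ) • T u + v) _).trans_eq ?_
        rw [add_sub_add_left_eq_sub]

lemma setOf_infinite_mem_residual {X : Type*} [TopologicalSpace X] {L : Set ℕ}
    {V : ℕ → Set X} (hV : ∀ n, IsOpen (V n)) (hdense : ∀ N, Dense (⋃ n ∈ L ∩ Ici N, V n)) :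
    {x | {n | n ∈ L ∧ x ∈ V n}.Infinite} ∈ residual X := by
  refine mem_of_superset (countable_iInter_mem.mpr fun N =>
    residual_of_dense_open (isOpen_biUnion fun n _ => hV n) (hdense N)) fun x hx => ?_
  rw [mem_ofPred, ← Nat.frequently_atTop_iff_infinite, frequently_atTop]
  intro N
  obtain ⟨n, ⟨hnL, hNn⟩, hxn⟩ := mem_iUnion₂.mp (mem_iInter.mp hx N)
  exact ⟨n, hNn, hnL, hxn⟩

theorem stmt_6_general (X : Type*) [NormedAddCommGroup X] [NormedSpace ℂ X]
    (A : X →L[ℂ] X) (K : ℕ → X → X)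
    (hK : ∀ j, 1 ≤ j → Continuous (K j) ∧
      ∀ B : Set X, Bornology.IsBounded B → IsCompact (closure (K j '' B)))
    (f : ℕ → X → X) (hf0 : ∀ x, f 0 x = x)
    (hfs : ∀ j x, f (j + 1) x = A (f j x) + K (j + 1) (f j x))
    (a : ℕ → ℝ)
    (ha0 : Filter.Tendsto a Filter.atTop (nhds 0))
    (L : Set ℕ) (hL : L.Infinite) :
    {x : X | {n | n ∈ L ∧ ‖f n x‖ ≥ a n * muNorm (A ^ n)}.Infinite} ∈ residual X := by
  -- the disjunct `muNorm (A ^ n) = 0` keeps `V n` open and makes it all of `X` when it holds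
  let V n := {x | a n * muNorm (A ^ n) < ‖f n x‖} ∪ {_x | muNorm (A ^ n) = 0}
  have hV n : IsOpen (V n) := by
    have hfn := continuous_orbit (fun j hj => (hK j hj).1) hf0 hfs n
    exact (isOpen_lt continuous_const hfn.norm).union isOpen_const
  have hV_le n x (hx : x ∈ V n) : a n * muNorm (A ^ n) ≤ ‖f n x‖ := by
    rcases hx with hlt | h0
    · exact hlt.le
    · simp [show muNorm (A ^ n) = 0 from h0]
  refine mem_of_superset (setOf_infinite_mem_residual hV fun N => ?_) fun x hx =>
    Set.Infinite.mono (fun n hn => ⟨hn.1, hV_le n x hn.2⟩) hx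
  refine Metric.dense_iff.mpr fun x₀ r hr => ?_
  have hLN : ∃ᶠ n in atTop, n ∈ L ∧ N ≤ n :=
    (Nat.frequently_atTop_iff_infinite.mpr hL).and_eventually (eventually_ge_atTop N)
  obtain ⟨n, ⟨hnL, hNn⟩, han⟩ :=
    (hLN.and_eventually (ha0.eventually_lt_const (by positivity : 0 < r / 8))).exists
  rcases (muNorm_nonneg (A ^ n)).eq_or_lt with h0 | hpos
  · exact ⟨x₀, mem_ball_self hr, mem_biUnion ⟨hnL, hNn⟩ (Or.inr h0.symm)⟩
  obtain ⟨C, hC, hfC⟩ := exists_isCompact_mapsTo_orbit_sub_pow (fun j hj => (hK j hj).2) hf0 hfs n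
    (isBounded_closedBall (x := x₀) (r := r / 2))
  obtain ⟨x, hx, hfx⟩ :=
    exists_mem_closedBall_muNorm_lt_norm (A ^ n) hpos (f n) (by positivity) hC hfC
  refine ⟨x, closedBall_subset_ball (by linarith) hx, mem_biUnion ⟨hnL, hNn⟩ (Or.inl ?_)⟩
  calc a n * muNorm (A ^ n) < r / 8 * muNorm (A ^ n) := by gcongr
    _ = r / 2 * muNorm (A ^ n) / 4 := by ring
    _ < ‖f n x‖ := hfx

/-- The set of initial data whose nonlinear orbits satisfy `‖f_n(x)‖ ≥ a_n ‖Aⁿ‖_μ` for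
infinitely many `n` in a given infinite set `L` is residual. -/
theorem stmt_6 (X : Type*) [NormedAddCommGroup X] [NormedSpace ℂ X] [CompleteSpace X]
    (hX : ¬ FiniteDimensional ℂ X)
    (A : X →L[ℂ] X) (K : ℕ → X → X)
    (hK : ∀ j, 1 ≤ j → Continuous (K j) ∧
      ∀ B : Set X, Bornology.IsBounded B → IsCompact (closure (K j '' B)))
    (f : ℕ → X → X) (hf0 : ∀ x, f 0 x = x)
    (hfs : ∀ j x, f (j + 1) x = A (f j x) + K (j + 1) (f j x))
    (a : ℕ → ℝ) (ha : ∀ n, 0 < a n)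
    (ha0 : Filter.Tendsto a Filter.atTop (nhds 0))
    (L : Set ℕ) (hL : L.Infinite) :
    {x : X | {n | n ∈ L ∧ ‖f n x‖ ≥ a n * muNorm (A ^ n)}.Infinite} ∈ residual X :=
  stmt_6_general X A K hK f hf0 hfs a ha0 L hL
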